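/- arXiv:cs/0508100 — 3 statements merged into one kernel-verified Lean document; each statement's English description precedes it below -/
import Mathlib

section
/- (Gelfond–Lifschitz) If an extended logic program Π has an inconsistent answer set S (i.e. S contains some complementary pair A, ¬A), then S is the set of all literals and S is the unique answer set of Π. -/
inductive Lit (α : Type*) where
  | pos : α → Lit α
  | neg : α → Lit α
  deriving DecidableEq

/-- An extended rule: a head literal, a finite set of positive body literals,
and a finite set of negative body literals. -/
structure ERule (α : Type*) where
  head : Lit α
  pos : Finset (Lit α)
  neg : Finset (Lit α)

/-- A set `S` of literals is GL-closed under a positive extended program `P` if it is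
closed under the rules of `P` and, whenever it contains a complementary pair,
it contains all literals. -/
def GLClosed {α : Type*} (P : Set (ERule α)) (S : Set (Lit α)) : Prop :=
  (∀ r ∈ P, ↑r.pos ⊆ S → r.head ∈ S) ∧
  ((∃ a, Lit.pos a ∈ S ∧ Lit.neg a ∈ S) → S = Set.univ)

/-- The answer set of a positive extended program: the least GL-closed set. -/
def eAnswer {α : Type*} (P : Set (ERule α)) : Set (Lit α) :=
  ⋂₀ {S | GLClosed P S}

/-- The Gelfond–Lifschitz reduct of an extended program. -/
def eReduct {α : Type*} (P : Set (ERule α)) (S : Set (Lit α)) : Set (ERule α) :=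
  {r' | ∃ r ∈ P, (↑r.neg ∩ S = ∅) ∧ r' = ERule.mk r.head r.pos ∅}

/-- `S` is an answer set of `P` if it equals the answer set of the reduct `eReduct P S`. -/
def AnswerSet {α : Type*} (P : Set (ERule α)) (S : Set (Lit α)) : Prop :=
  S = eAnswer (eReduct P S)

/-- `S` is consistent if it contains no complementary pair. -/
def Consistent {α : Type*} (S : Set (Lit α)) : Prop :=
  ¬ ∃ a, Lit.pos a ∈ S ∧ Lit.neg a ∈ S

lemma glclosed_eAnswer {α : Type*} (P : Set (ERule α)) : GLClosed P (eAnswer P) := by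
  constructor
  · intro r hr hpos
    intro T hT
    exact hT.1 r hr fun x hx => hpos hx T hT
  · rintro ⟨a, ha, hna⟩
    apply Set.eq_univ_of_univ_subset
    intro x _
    intro T hT
    have hTu : T = Set.univ := hT.2 ⟨a, ha T hT, hna T hT⟩
    simp [hTu]

lemma eAnswer_mono {α : Type*} {P Q : Set (ERule α)} (h : P ⊆ Q) :
    eAnswer P ⊆ eAnswer Q := by
  intro x hx T hT
  exact hx T ⟨fun r hr => hT.1 r (h hr), hT.2⟩

/-- (Gelfond–Lifschitz) If an extended program has an inconsistent answer set `S`,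
then `S` is the set of all literals and it is the unique answer set. -/
theorem stmt4 {α : Type*} (P : Set (ERule α)) (S : Set (Lit α))
    (hS : AnswerSet P S) (hinc : ¬ Consistent S) :
    S = Set.univ ∧ ∀ S' : Set (Lit α), AnswerSet P S' → S' = S := by
  have hpair : ∃ a, Lit.pos a ∈ S ∧ Lit.neg a ∈ S := by
    simpa [Consistent] using hinc
  have hgl := glclosed_eAnswer (eReduct P S)
  have hSuniv : S = Set.univ := by
    rw [hS]; exact hgl.2 (hS ▸ hpair)
  refine ⟨hSuniv, fun S' hS' => ?_⟩
  have hsub : eReduct P S ⊆ eReduct P S' := by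
    rintro r' ⟨r, hr, hneg, rfl⟩
    refine ⟨r, hr, ?_, rfl⟩
    have : (↑r.neg : Set (Lit α)) = ∅ := by
      rw [hSuniv] at hneg; simpa using hneg
    simp [this]
  have : S ⊆ S' := by
    rw [hS, hS']
    exact eAnswer_mono hsub
  rw [hSuniv] at this ⊢
  exact Set.eq_univ_of_univ_subset this
end

section
/- (Marek–Subramanian, part 2) Let A be a consistent answer set of an extended logic program Π and suppose L0 ∈ A. Then there exists a rule L0 ← L1,…,Lm, not L_{m+1},…,not L_n of Π with head L0 such that {L1,…,Lm} ⊆ A and {L_{m+1},…,L_n} ∩ A = ∅. -/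
/-- (Marek–Subramanian, part 2) If `A` is a consistent answer set of `P` and `L0 ∈ A`,
then some rule of `P` with head `L0` has its positive body contained in `A` and its
negative body disjoint from `A`. -/
theorem stmt6 {α : Type*} (P : Set (ERule α)) (A : Set (Lit α))
    (hcons : Consistent A) (hA : AnswerSet P A) (L0 : Lit α) (hL0 : L0 ∈ A) :
    ∃ r ∈ P, r.head = L0 ∧ ↑r.pos ⊆ A ∧ ↑r.neg ∩ A = ∅ := by
  by_contra hno
  push_neg at hno
  -- A is GL-closed under the reduct (it's the intersection of GL-closed sets)
  have key : ∀ Q : Set (ERule α), GLClosed Q (eAnswer Q) := by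
    intro Q
    constructor
    · intro r hr hpos S hS
      exact hS.1 r hr (hpos.trans (Set.sInter_subset_of_mem hS))
    · intro ⟨a, ha1, ha2⟩
      ext x
      simp only [Set.mem_univ, iff_true, eAnswer, Set.mem_sInter]
      intro S hS
      have := hS.2 ⟨a, ha1 S hS, ha2 S hS⟩
      rw [this]; trivial
  have hAcl : GLClosed (eReduct P A) A := by
    nth_rewrite 2 [hA]; exact key _
  -- T = A \ {L0} is GL-closed under the reduct
  set T : Set (Lit α) := A \ {L0} with hT
  have hTcl : GLClosed (eReduct P A) T := by
    constructor
    · rintro r' hr' hpos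
      obtain ⟨r, hrP, hneg, heq⟩ := hr'
      subst heq
      have hposA : ↑r.pos ⊆ A := hpos.trans (Set.diff_subset)
      have hheadA : (ERule.mk r.head r.pos ∅).head ∈ A :=
        hAcl.1 _ ⟨r, hrP, hneg, rfl⟩ hposA
      refine ⟨hheadA, ?_⟩
      intro h
      exact Set.not_nonempty_empty (hneg ▸ hno r hrP (Set.mem_singleton_iff.mp h) hposA)
    · intro ⟨a, ha1, ha2⟩
      exact absurd ⟨a, ha1.1, ha2.1⟩ hcons
  have : A ⊆ T := by
    conv_lhs => rw [hA]
    exact Set.sInter_subset_of_mem hTcl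
  exact (this hL0).2 rfl
end

section
/- For an extended logic program Π in which no rule mentions any explicitly negated literal (neither in heads nor bodies), a set of positive literals is an answer set of Π if and only if the corresponding set of atoms is a stable model of the corresponding normal program; in particular every answer set of such a program is consistent and contains only positive literals. -/
/-- A ground rule: a head atom, a finite set of positive body atoms,
and a finite set of negative body atoms. -/
structure Rule (α : Type*) where
  head : α
  pos : Finset α
  neg : Finset α

/-- A set `S` of atoms is closed under a (positive) program `P` if for every
rule of `P` whose positive body is contained in `S`, the head is in `S`. -/
def Closed {α : Type*} (P : Set (Rule α)) (S : Set α) : Prop :=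
  ∀ r ∈ P, ↑r.pos ⊆ S → r.head ∈ S

/-- The stable model of a positive program: the least set closed under `P`. -/
def leastModel {α : Type*} (P : Set (Rule α)) : Set α :=
  ⋂₀ {S | Closed P S}

/-- The Gelfond–Lifschitz reduct of `P` relative to `S`: delete every rule whose
negative body meets `S`, and delete the negative bodies of the remaining rules. -/
def reduct {α : Type*} (P : Set (Rule α)) (S : Set α) : Set (Rule α) :=
  {r' | ∃ r ∈ P, (↑r.neg ∩ S = ∅) ∧ r' = Rule.mk r.head r.pos ∅}

/-- `S` is a stable model of `P` if it equals the stable model of the reduct. -/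
def StableModel {α : Type*} (P : Set (Rule α)) (S : Set α) : Prop :=
  S = leastModel (reduct P S)

/-- The atom underlying a literal. -/
def Lit.atom {α : Type*} : Lit α → α
  | .pos a => a
  | .neg a => a

/-- The normal rule corresponding to an extended rule (meaningful when the rule
mentions only positive literals). -/
def ERule.toNormal {α : Type*} [DecidableEq α] (r : ERule α) : Rule α :=
  Rule.mk r.head.atom (r.pos.image Lit.atom) (r.neg.image Lit.atom)

-- helper lemmas to insert
lemma leastModel_closed {α : Type*} (P : Set (Rule α)) : Closed P (leastModel P) := by
  intro r hr hsub
  refine Set.mem_sInter.mpr fun S hS => ?_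
  exact hS r hr (hsub.trans (Set.sInter_subset_of_mem hS))

lemma leastModel_le {α : Type*} {P : Set (Rule α)} {S : Set α} (h : Closed P S) :
    leastModel P ⊆ S := Set.sInter_subset_of_mem h

lemma eAnswer_eq_image {α : Type*} [DecidableEq α] (Q : Set (ERule α))
    (h : ∀ r ∈ Q, (∃ a, r.head = Lit.pos a) ∧ ∀ l ∈ r.pos, ∃ a, l = Lit.pos a) :
    eAnswer Q = Lit.pos '' leastModel (ERule.toNormal '' Q) := by
  set L := leastModel (ERule.toNormal '' Q) with hL
  apply subset_antisymm
  · apply Set.sInter_subset_of_mem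
    constructor
    · intro r hr hsub
      obtain ⟨⟨a, ha⟩, hp⟩ := h r hr
      have hbody : ↑(ERule.toNormal r).pos ⊆ L := by
        intro x hx
        simp only [ERule.toNormal, Finset.coe_image, Set.mem_image, Finset.mem_coe] at hx
        obtain ⟨l, hl, rfl⟩ := hx
        obtain ⟨b, rfl⟩ := hp l hl
        obtain ⟨c, hc, hcl⟩ := hsub hl
        cases hcl
        exact hc
      have := leastModel_closed (ERule.toNormal '' Q) (ERule.toNormal r)
        ⟨r, hr, rfl⟩ hbody
      rw [ha]
      exact ⟨a, by simpa [ERule.toNormal, ha, Lit.atom] using this, rfl⟩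
    · rintro ⟨a, -, h2⟩
      obtain ⟨b, -, hb⟩ := h2
      cases hb
  · rintro l ⟨a, haL, rfl⟩
    refine Set.mem_sInter.mpr fun S' hS' => ?_
    have hclosed : Closed (ERule.toNormal '' Q) {b | Lit.pos b ∈ S'} := by
      rintro n ⟨r, hr, rfl⟩ hsub
      obtain ⟨⟨c, hc⟩, hp⟩ := h r hr
      have : r.head ∈ S' := by
        apply hS'.1 r hr
        intro l hl
        obtain ⟨b, rfl⟩ := hp l hl
        have hb : b ∈ ↑(ERule.toNormal r).pos :=
          Finset.mem_coe.mpr (Finset.mem_image.mpr ⟨Lit.pos b, hl, rfl⟩)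
        exact hsub hb
      simpa [ERule.toNormal, hc, Lit.atom] using (hc ▸ this)
    exact leastModel_le hclosed haL

lemma reduct_corresp {α : Type*} [DecidableEq α] (P : Set (ERule α))
    (hnoneg : ∀ r ∈ P, (∃ a, r.head = Lit.pos a) ∧
      (∀ l ∈ r.pos, ∃ a, l = Lit.pos a) ∧ (∀ l ∈ r.neg, ∃ a, l = Lit.pos a))
    (S : Set (Lit α)) :
    ERule.toNormal '' eReduct P S = reduct (ERule.toNormal '' P) {a | Lit.pos a ∈ S} := by
  ext n
  constructor
  · rintro ⟨r', ⟨r, hr, hneg, rfl⟩, rfl⟩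
    refine ⟨ERule.toNormal r, ⟨r, hr, rfl⟩, ?_, ?_⟩
    · ext b
      simp only [ERule.toNormal, Finset.coe_image, Set.mem_inter_iff, Set.mem_image,
        Finset.mem_coe, Set.mem_setOf_eq, Set.mem_empty_iff_false, iff_false, not_and]
      rintro ⟨l, hl, rfl⟩ hbS
      obtain ⟨a, rfl⟩ := (hnoneg r hr).2.2 l hl
      have : Lit.pos a ∈ (↑r.neg ∩ S : Set (Lit α)) := ⟨hl, hbS⟩
      rw [hneg] at this
      exact this
    · simp [ERule.toNormal]
  · rintro ⟨n', ⟨r, hr, rfl⟩, hneg, rfl⟩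
    refine ⟨ERule.mk r.head r.pos ∅, ⟨r, hr, ?_, rfl⟩, ?_⟩
    · ext l
      simp only [Set.mem_inter_iff, Finset.mem_coe, Set.mem_empty_iff_false, iff_false, not_and]
      intro hl hlS
      obtain ⟨a, rfl⟩ := (hnoneg r hr).2.2 l hl
      have : a ∈ (↑(ERule.toNormal r).neg ∩ {a | Lit.pos a ∈ S} : Set α) := by
        refine ⟨?_, hlS⟩
        simp only [ERule.toNormal, Finset.coe_image, Set.mem_image, Finset.mem_coe]
        exact ⟨Lit.pos a, hl, rfl⟩
      rw [hneg] at this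
      exact this
    · simp [ERule.toNormal]

/-- For an extended program mentioning no explicitly negated literal, a set of
positive literals is an answer set iff the corresponding set of atoms is a stable
model of the corresponding normal program; in particular every answer set of such
a program is consistent and contains only positive literals. -/
theorem stmt9 {α : Type*} [DecidableEq α] (P : Set (ERule α))
    (hnoneg : ∀ r ∈ P, (∃ a, r.head = Lit.pos a) ∧
      (∀ l ∈ r.pos, ∃ a, l = Lit.pos a) ∧ (∀ l ∈ r.neg, ∃ a, l = Lit.pos a)) :
    (∀ S : Set (Lit α), (∀ l ∈ S, ∃ a, l = Lit.pos a) →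
      (AnswerSet P S ↔ StableModel (ERule.toNormal '' P) {a | Lit.pos a ∈ S})) ∧
    (∀ S : Set (Lit α), AnswerSet P S →
      Consistent S ∧ ∀ l ∈ S, ∃ a, l = Lit.pos a) := by
  have hQpos : ∀ S : Set (Lit α), ∀ r ∈ eReduct P S,
      (∃ a, r.head = Lit.pos a) ∧ ∀ l ∈ r.pos, ∃ a, l = Lit.pos a := by
    rintro S r' ⟨r, hr, -, rfl⟩
    exact ⟨(hnoneg r hr).1, (hnoneg r hr).2.1⟩
  constructor
  · intro S hSpos
    have hkey : eAnswer (eReduct P S)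
        = Lit.pos '' leastModel (reduct (ERule.toNormal '' P) {a | Lit.pos a ∈ S}) := by
      rw [eAnswer_eq_image _ (hQpos S), reduct_corresp P hnoneg S]
    constructor
    · intro hAS
      unfold StableModel
      have hthis : S = Lit.pos '' leastModel (reduct (ERule.toNormal '' P)
          {a | Lit.pos a ∈ S}) := by
        have := hAS; unfold AnswerSet at this; rw [hkey] at this; exact this
      generalize leastModel (reduct (ERule.toNormal '' P) {a | Lit.pos a ∈ S}) = L
        at hthis ⊢
      ext a
      rw [Set.mem_setOf_eq, hthis]
      constructor
      · rintro ⟨b, hb, heq⟩; cases heq; exact hb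
      · intro ha; exact ⟨a, ha, rfl⟩
    · intro hSM
      unfold AnswerSet
      rw [hkey, ← hSM]
      ext l
      constructor
      · intro hl
        obtain ⟨a, rfl⟩ := hSpos l hl
        exact ⟨a, hl, rfl⟩
      · rintro ⟨a, ha, rfl⟩; exact ha
  · intro S hAS
    have hSpos : ∀ l ∈ S, ∃ a, l = Lit.pos a := by
      intro l hl
      rw [hAS, eAnswer_eq_image _ (hQpos S)] at hl
      obtain ⟨a, -, rfl⟩ := hl
      exact ⟨a, rfl⟩
    refine ⟨?_, hSpos⟩
    rintro ⟨a, -, h2⟩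
    obtain ⟨b, hb⟩ := hSpos _ h2
    cases hb
end
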